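/- Let α > 1, β > 0, s > 0, γ ≠ 1, and set δ = (γ-1)(α-1)/β with δ > 0. Then the pathway function g(x) = x^{γ-1}[1 - s(1-α)x^δ]^{β/(1-α)} satisfies, for all x > 0, the differential equation x g'(x) = (γ-1) g(x) - sβδ [g(x)]^{1 - (1-α)/β}. In particular, for β = 1, δ = (γ-1)(α-1): x g'(x) = (γ-1) g(x) - sδ [g(x)]^α. -/
import Mathlib


/-- The pathway function `g(x) = x^{γ-1}[1 - s(1-α)x^δ]^{β/(1-α)}`, with
`α > 1`, `β > 0`, `s > 0`, `γ ≠ 1`, `δ = (γ-1)(α-1)/β > 0`, satisfies for all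
`x > 0` the differential equation
`x g'(x) = (γ-1) g(x) - sβδ [g(x)]^{1-(1-α)/β}`; in particular, for `β = 1`
(so `δ = (γ-1)(α-1)`), `x g'(x) = (γ-1) g(x) - sδ [g(x)]^α`. -/
theorem pathway_differential_equation (α β s γ δ : ℝ)
    (hα : 1 < α) (hβ : 0 < β) (hs : 0 < s) (hγ : γ ≠ 1)
    (hδ : δ = (γ - 1) * (α - 1) / β) (hδ0 : 0 < δ)
    (g : ℝ → ℝ)
    (hg : ∀ x : ℝ, g x = x ^ (γ - 1) * (1 - s * (1 - α) * x ^ δ) ^ (β / (1 - α))) :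
    (∀ x : ℝ, 0 < x → ∃ d : ℝ, HasDerivAt g d x ∧
      x * d = (γ - 1) * g x - s * β * δ * (g x) ^ (1 - (1 - α) / β))
    ∧ (β = 1 → ∀ x : ℝ, 0 < x → ∃ d : ℝ, HasDerivAt g d x ∧
      x * d = (γ - 1) * g x - s * δ * (g x) ^ α) := by
  have hgf : g = fun x : ℝ => x ^ (γ - 1) * (1 - s * (1 - α) * x ^ δ) ^ (β / (1 - α)) :=
    funext hg
  have key : ∀ x : ℝ, 0 < x → ∃ d : ℝ, HasDerivAt g d x ∧
      x * d = (γ - 1) * g x - s * β * δ * (g x) ^ (1 - (1 - α) / β) := by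
    intro x hx
    set c : ℝ := β / (1 - α) with hc
    set u : ℝ := 1 - s * (1 - α) * x ^ δ with hu
    have hxδ : (0:ℝ) < x ^ δ := Real.rpow_pos_of_pos hx δ
    have hupos : 0 < u := by
      have : s * (1 - α) * x ^ δ < 0 :=
        mul_neg_of_neg_of_pos (mul_neg_of_pos_of_neg hs (by linarith)) hxδ
      simp only [hu]; linarith
    have h1 : HasDerivAt (fun y : ℝ => y ^ (γ - 1)) ((γ - 1) * x ^ (γ - 1 - 1)) x :=
      Real.hasDerivAt_rpow_const (Or.inl hx.ne')
    have h2 : HasDerivAt (fun y : ℝ => y ^ δ) (δ * x ^ (δ - 1)) x :=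
      Real.hasDerivAt_rpow_const (Or.inl hx.ne')
    have h3 : HasDerivAt (fun y : ℝ => 1 - s * (1 - α) * y ^ δ)
        (0 - s * (1 - α) * (δ * x ^ (δ - 1))) x :=
      (hasDerivAt_const x (1:ℝ)).sub (h2.const_mul (s * (1 - α)))
    have h4 : HasDerivAt (fun y : ℝ => (1 - s * (1 - α) * y ^ δ) ^ c)
        ((0 - s * (1 - α) * (δ * x ^ (δ - 1))) * c * u ^ (c - 1)) x :=
      h3.rpow_const (Or.inl hupos.ne')
    have hd : HasDerivAt g
        ((γ - 1) * x ^ (γ - 1 - 1) * u ^ c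
          + x ^ (γ - 1) * ((0 - s * (1 - α) * (δ * x ^ (δ - 1))) * c * u ^ (c - 1))) x := by
      rw [hgf]; exact h1.mul h4
    refine ⟨_, hd, ?_⟩
    have hα1 : (1 : ℝ) - α ≠ 0 := by linarith
    have he1 : (γ - 1) * (1 - (1 - α) / β) = (γ - 1) + δ := by
      rw [hδ]; field_simp; ring
    have he2 : c * (1 - (1 - α) / β) = c - 1 := by
      rw [hc]; field_simp
    have hgx : g x = x ^ (γ - 1) * u ^ c := hg x
    have hgxpow : (g x) ^ (1 - (1 - α) / β) = x ^ ((γ - 1) + δ) * u ^ (c - 1) := by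
      rw [hgx, Real.mul_rpow (Real.rpow_pos_of_pos hx _).le
          (Real.rpow_pos_of_pos hupos _).le,
        ← Real.rpow_mul hx.le, ← Real.rpow_mul hupos.le, he1, he2]
    have hxa : x ^ (γ - 1 - 1) = x ^ (γ - 1) / x := by
      rw [Real.rpow_sub hx, Real.rpow_one]
    have hxb : x ^ (δ - 1) = x ^ δ / x := by
      rw [Real.rpow_sub hx, Real.rpow_one]
    have hxc : x ^ ((γ - 1) + δ) = x ^ (γ - 1) * x ^ δ := Real.rpow_add hx _ _
    rw [hgxpow, hgx, hxa, hxb, hxc, hc]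
    field_simp
    ring
  refine ⟨key, fun hβ1 x hx => ?_⟩
  obtain ⟨d, hd, heq⟩ := key x hx
  refine ⟨d, hd, ?_⟩
  rw [heq, hβ1]
  norm_num
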